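/- Let U ⊆ ℝ³ be open and let u, v : ℝ³ → ℝ be smooth. Suppose that on U the covering equations v_t = −(u + (u_x² + u_y)·v_x) and v_y = −(u_x·v_x + x) hold, where x denotes the second coordinate function on ℝ³. Then at every point p ∈ U with v_x(p) ≠ 0, the function u satisfies equation (mdKP_κ) with κ = −3, namely u_yy = u_tx + (−u_x² + u_y)·u_xx − 3·u_x·u_xy, at p. -/

import Mathlib

/-- Partial derivative with respect to the first coordinate `t` of `(t,x,y) : ℝ × ℝ × ℝ`. -/
noncomputable def pd_t (f : ℝ × ℝ × ℝ → ℝ) (p : ℝ × ℝ × ℝ) : ℝ :=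
  deriv (fun s => f (s, p.2.1, p.2.2)) p.1

/-- Partial derivative with respect to the second coordinate `x`. -/
noncomputable def pd_x (f : ℝ × ℝ × ℝ → ℝ) (p : ℝ × ℝ × ℝ) : ℝ :=
  deriv (fun s => f (p.1, s, p.2.2)) p.2.1

/-- Partial derivative with respect to the third coordinate `y`. -/
noncomputable def pd_y (f : ℝ × ℝ × ℝ → ℝ) (p : ℝ × ℝ × ℝ) : ℝ :=
  deriv (fun s => f (p.1, p.2.1, s)) p.2.2

section helpers

variable {f : ℝ × ℝ × ℝ → ℝ} {p : ℝ × ℝ × ℝ}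

lemma lineT_hasDerivAt (p : ℝ × ℝ × ℝ) :
    HasDerivAt (fun s : ℝ => ((s, p.2.1, p.2.2) : ℝ × ℝ × ℝ)) (1, 0, 0) p.1 :=
  HasDerivAt.prodMk (hasDerivAt_id' p.1) (HasDerivAt.prodMk (hasDerivAt_const _ _) (hasDerivAt_const _ _))

lemma lineX_hasDerivAt (p : ℝ × ℝ × ℝ) :
    HasDerivAt (fun s : ℝ => ((p.1, s, p.2.2) : ℝ × ℝ × ℝ)) (0, 1, 0) p.2.1 :=
  HasDerivAt.prodMk (hasDerivAt_const _ _) (HasDerivAt.prodMk (hasDerivAt_id' p.2.1) (hasDerivAt_const _ _))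

lemma lineY_hasDerivAt (p : ℝ × ℝ × ℝ) :
    HasDerivAt (fun s : ℝ => ((p.1, p.2.1, s) : ℝ × ℝ × ℝ)) (0, 0, 1) p.2.2 :=
  HasDerivAt.prodMk (hasDerivAt_const _ _) (HasDerivAt.prodMk (hasDerivAt_const _ _) (hasDerivAt_id' p.2.2))

lemma pd_t_eq_fderiv (hf : DifferentiableAt ℝ f p) :
    pd_t f p = fderiv ℝ f p (1, 0, 0) :=
  (hf.hasFDerivAt.comp_hasDerivAt p.1 (lineT_hasDerivAt p)).deriv

lemma pd_x_eq_fderiv (hf : DifferentiableAt ℝ f p) :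
    pd_x f p = fderiv ℝ f p (0, 1, 0) :=
  (hf.hasFDerivAt.comp_hasDerivAt p.2.1 (lineX_hasDerivAt p)).deriv

lemma pd_y_eq_fderiv (hf : DifferentiableAt ℝ f p) :
    pd_y f p = fderiv ℝ f p (0, 0, 1) :=
  (hf.hasFDerivAt.comp_hasDerivAt p.2.2 (lineY_hasDerivAt p)).deriv

lemma contDiff_fderiv_apply (hf : ContDiff ℝ (⊤ : ℕ∞) f) (w : ℝ × ℝ × ℝ) :
    ContDiff ℝ (⊤ : ℕ∞) (fun q => fderiv ℝ f q w) :=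
  (ContinuousLinearMap.apply ℝ ℝ w).contDiff.comp (hf.fderiv_right (by simp))

lemma pd_t_eq_fun (hf : ContDiff ℝ (⊤ : ℕ∞) f) :
    pd_t f = fun q => fderiv ℝ f q (1, 0, 0) :=
  funext fun q => pd_t_eq_fderiv (hf.differentiable (by simp) q)

lemma pd_x_eq_fun (hf : ContDiff ℝ (⊤ : ℕ∞) f) :
    pd_x f = fun q => fderiv ℝ f q (0, 1, 0) :=
  funext fun q => pd_x_eq_fderiv (hf.differentiable (by simp) q)

lemma pd_y_eq_fun (hf : ContDiff ℝ (⊤ : ℕ∞) f) :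
    pd_y f = fun q => fderiv ℝ f q (0, 0, 1) :=
  funext fun q => pd_y_eq_fderiv (hf.differentiable (by simp) q)

lemma contDiff_pd_t (hf : ContDiff ℝ (⊤ : ℕ∞) f) : ContDiff ℝ (⊤ : ℕ∞) (pd_t f) := by
  rw [pd_t_eq_fun hf]; exact contDiff_fderiv_apply hf _

lemma contDiff_pd_x (hf : ContDiff ℝ (⊤ : ℕ∞) f) : ContDiff ℝ (⊤ : ℕ∞) (pd_x f) := by
  rw [pd_x_eq_fun hf]; exact contDiff_fderiv_apply hf _

lemma contDiff_pd_y (hf : ContDiff ℝ (⊤ : ℕ∞) f) : ContDiff ℝ (⊤ : ℕ∞) (pd_y f) := by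
  rw [pd_y_eq_fun hf]; exact contDiff_fderiv_apply hf _

lemma fderiv_apply_comm (hf : ContDiff ℝ (⊤ : ℕ∞) f) (p v w : ℝ × ℝ × ℝ) :
    fderiv ℝ (fun q => fderiv ℝ f q w) p v = fderiv ℝ (fun q => fderiv ℝ f q v) p w := by
  have hd2 : DifferentiableAt ℝ (fderiv ℝ f) p :=
    ((hf.fderiv_right (m := (⊤ : ℕ∞)) (by simp)).differentiable (by simp)) p
  have h1 : HasFDerivAt (fun q => fderiv ℝ f q w)
      ((ContinuousLinearMap.apply ℝ ℝ w).comp (fderiv ℝ (fderiv ℝ f) p)) p :=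
    (ContinuousLinearMap.apply ℝ ℝ w).hasFDerivAt.comp p hd2.hasFDerivAt
  have h2 : HasFDerivAt (fun q => fderiv ℝ f q v)
      ((ContinuousLinearMap.apply ℝ ℝ v).comp (fderiv ℝ (fderiv ℝ f) p)) p :=
    (ContinuousLinearMap.apply ℝ ℝ v).hasFDerivAt.comp p hd2.hasFDerivAt
  rw [h1.fderiv, h2.fderiv]
  simp only [ContinuousLinearMap.coe_comp', Function.comp_apply,
    ContinuousLinearMap.apply_apply]
  exact second_derivative_symmetric
    (fun y => (hf.differentiable (by simp) y).hasFDerivAt) hd2.hasFDerivAt v w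

lemma pd_swap_yt (hf : ContDiff ℝ (⊤ : ℕ∞) f) (p : ℝ × ℝ × ℝ) :
    pd_y (pd_t f) p = pd_t (pd_y f) p := by
  rw [pd_y_eq_fderiv ((by rw [pd_t_eq_fun hf]; exact (contDiff_fderiv_apply hf _).differentiable (by simp) p :
        DifferentiableAt ℝ (pd_t f) p)),
      pd_t_eq_fderiv ((by rw [pd_y_eq_fun hf]; exact (contDiff_fderiv_apply hf _).differentiable (by simp) p :
        DifferentiableAt ℝ (pd_y f) p)),
      pd_t_eq_fun hf, pd_y_eq_fun hf]
  exact fderiv_apply_comm hf p _ _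

lemma pd_swap_xy (hf : ContDiff ℝ (⊤ : ℕ∞) f) (p : ℝ × ℝ × ℝ) :
    pd_x (pd_y f) p = pd_y (pd_x f) p := by
  rw [pd_x_eq_fderiv ((by rw [pd_y_eq_fun hf]; exact (contDiff_fderiv_apply hf _).differentiable (by simp) p :
        DifferentiableAt ℝ (pd_y f) p)),
      pd_y_eq_fderiv ((by rw [pd_x_eq_fun hf]; exact (contDiff_fderiv_apply hf _).differentiable (by simp) p :
        DifferentiableAt ℝ (pd_x f) p)),
      pd_y_eq_fun hf, pd_x_eq_fun hf]
  exact fderiv_apply_comm hf p _ _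

lemma pd_swap_xt (hf : ContDiff ℝ (⊤ : ℕ∞) f) (p : ℝ × ℝ × ℝ) :
    pd_x (pd_t f) p = pd_t (pd_x f) p := by
  rw [pd_x_eq_fderiv ((by rw [pd_t_eq_fun hf]; exact (contDiff_fderiv_apply hf _).differentiable (by simp) p :
        DifferentiableAt ℝ (pd_t f) p)),
      pd_t_eq_fderiv ((by rw [pd_x_eq_fun hf]; exact (contDiff_fderiv_apply hf _).differentiable (by simp) p :
        DifferentiableAt ℝ (pd_x f) p)),
      pd_t_eq_fun hf, pd_x_eq_fun hf]
  exact fderiv_apply_comm hf p _ _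

lemma lineT_F_hasDerivAt (hf : ContDiff ℝ (⊤ : ℕ∞) f) (p : ℝ × ℝ × ℝ) :
    HasDerivAt (fun s => f (s, p.2.1, p.2.2)) (pd_t f p) p.1 := by
  have hd : DifferentiableAt ℝ (fun s => f (s, p.2.1, p.2.2)) p.1 :=
    (hf.differentiable (by simp) _).comp p.1 (lineT_hasDerivAt p).differentiableAt
  exact hd.hasDerivAt

lemma lineX_F_hasDerivAt (hf : ContDiff ℝ (⊤ : ℕ∞) f) (p : ℝ × ℝ × ℝ) :
    HasDerivAt (fun s => f (p.1, s, p.2.2)) (pd_x f p) p.2.1 := by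
  have hd : DifferentiableAt ℝ (fun s => f (p.1, s, p.2.2)) p.2.1 :=
    (hf.differentiable (by simp) _).comp p.2.1 (lineX_hasDerivAt p).differentiableAt
  exact hd.hasDerivAt

lemma lineY_F_hasDerivAt (hf : ContDiff ℝ (⊤ : ℕ∞) f) (p : ℝ × ℝ × ℝ) :
    HasDerivAt (fun s => f (p.1, p.2.1, s)) (pd_y f p) p.2.2 := by
  have hd : DifferentiableAt ℝ (fun s => f (p.1, p.2.1, s)) p.2.2 :=
    (hf.differentiable (by simp) _).comp p.2.2 (lineY_hasDerivAt p).differentiableAt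
  exact hd.hasDerivAt

end helpers

/-- the covering (42) (case κ = −3) implies the mdKP equation where `v_x ≠ 0`. -/
theorem covering_WE5_implies_mdKP (U : Set (ℝ × ℝ × ℝ)) (hU : IsOpen U)
    (u v : ℝ × ℝ × ℝ → ℝ) (hu : ContDiff ℝ (⊤ : ℕ∞) u) (hv : ContDiff ℝ (⊤ : ℕ∞) v)
    (hvt : ∀ q ∈ U, pd_t v q = -(u q + ((pd_x u q) ^ 2 + pd_y u q) * pd_x v q))
    (hvy : ∀ q ∈ U, pd_y v q = -(pd_x u q * pd_x v q + q.2.1)) :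
    ∀ p ∈ U, pd_x v p ≠ 0 →
      pd_y (pd_y u) p =
        pd_t (pd_x u) p
        + (-(pd_x u p) ^ 2 + pd_y u p) * pd_x (pd_x u) p
        - 3 * pd_x u p * pd_y (pd_x u) p := by
  intro p hp hvx
  have hux : ContDiff ℝ (⊤ : ℕ∞) (pd_x u) := contDiff_pd_x hu
  have huy : ContDiff ℝ (⊤ : ℕ∞) (pd_y u) := contDiff_pd_y hu
  have hvxc : ContDiff ℝ (⊤ : ℕ∞) (pd_x v) := contDiff_pd_x hv
  -- eventual memberships along coordinate lines
  have hyU : ∀ᶠ s in nhds p.2.2, ((p.1, p.2.1, s) : ℝ × ℝ × ℝ) ∈ U := by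
    have hc : Continuous (fun s : ℝ => ((p.1, p.2.1, s) : ℝ × ℝ × ℝ)) := by fun_prop
    exact hc.continuousAt.preimage_mem_nhds (hU.mem_nhds hp)
  have htU : ∀ᶠ s in nhds p.1, ((s, p.2.1, p.2.2) : ℝ × ℝ × ℝ) ∈ U := by
    have hc : Continuous (fun s : ℝ => ((s, p.2.1, p.2.2) : ℝ × ℝ × ℝ)) := by fun_prop
    exact hc.continuousAt.preimage_mem_nhds (hU.mem_nhds hp)
  have hxU : ∀ᶠ s in nhds p.2.1, ((p.1, s, p.2.2) : ℝ × ℝ × ℝ) ∈ U := by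
    have hc : Continuous (fun s : ℝ => ((p.1, s, p.2.2) : ℝ × ℝ × ℝ)) := by fun_prop
    exact hc.continuousAt.preimage_mem_nhds (hU.mem_nhds hp)
  -- E1 : pd_y of the v_t equation
  have hEq1 : (fun s => pd_t v (p.1, p.2.1, s)) =ᶠ[nhds p.2.2]
      (fun s => -(u (p.1, p.2.1, s) +
        ((pd_x u (p.1, p.2.1, s)) ^ 2 + pd_y u (p.1, p.2.1, s)) * pd_x v (p.1, p.2.1, s))) :=
    hyU.mono fun s hs => hvt _ hs
  have hG1 := (((lineY_F_hasDerivAt hu p).add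
      ((((lineY_F_hasDerivAt hux p).pow 2).add (lineY_F_hasDerivAt huy p)).mul
        (lineY_F_hasDerivAt hvxc p))).neg)
  have E1 := hEq1.deriv_eq.trans hG1.deriv
  -- E2 : pd_t of the v_y equation
  have hEq2 : (fun s => pd_y v (s, p.2.1, p.2.2)) =ᶠ[nhds p.1]
      (fun s => -(pd_x u (s, p.2.1, p.2.2) * pd_x v (s, p.2.1, p.2.2) + (s, p.2.1, p.2.2).2.1)) :=
    htU.mono fun s hs => hvy _ hs
  have hG2 := (((lineT_F_hasDerivAt hux p).mul (lineT_F_hasDerivAt hvxc p)).add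
      (hasDerivAt_const p.1 p.2.1)).neg
  have E2 := hEq2.deriv_eq.trans hG2.deriv
  -- E3 : pd_x of the v_y equation
  have hEq3 : (fun s => pd_y v (p.1, s, p.2.2)) =ᶠ[nhds p.2.1]
      (fun s => -(pd_x u (p.1, s, p.2.2) * pd_x v (p.1, s, p.2.2) + (p.1, s, p.2.2).2.1)) :=
    hxU.mono fun s hs => hvy _ hs
  have hG3 := (((lineX_F_hasDerivAt hux p).mul (lineX_F_hasDerivAt hvxc p)).add
      (hasDerivAt_id' p.2.1)).neg
  have E3 := hEq3.deriv_eq.trans hG3.deriv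
  -- E4 : pd_x of the v_t equation
  have hEq4 : (fun s => pd_t v (p.1, s, p.2.2)) =ᶠ[nhds p.2.1]
      (fun s => -(u (p.1, s, p.2.2) +
        ((pd_x u (p.1, s, p.2.2)) ^ 2 + pd_y u (p.1, s, p.2.2)) * pd_x v (p.1, s, p.2.2))) :=
    hxU.mono fun s hs => hvt _ hs
  have hG4 := (((lineX_F_hasDerivAt hu p).add
      ((((lineX_F_hasDerivAt hux p).pow 2).add (lineX_F_hasDerivAt huy p)).mul
        (lineX_F_hasDerivAt hvxc p))).neg)
  have E4 := hEq4.deriv_eq.trans hG4.deriv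
  -- identify LHSs with pd compositions
  change pd_y (pd_t v) p = _ at E1
  change pd_t (pd_y v) p = _ at E2
  change pd_x (pd_y v) p = _ at E3
  change pd_x (pd_t v) p = _ at E4
  -- symmetry of mixed partials
  have S1 : pd_y (pd_t v) p = pd_t (pd_y v) p := pd_swap_yt hv p
  have S2 : pd_x (pd_y v) p = pd_y (pd_x v) p := pd_swap_xy hv p
  have S3 : pd_x (pd_t v) p = pd_t (pd_x v) p := pd_swap_xt hv p
  have S4 : pd_x (pd_y u) p = pd_y (pd_x u) p := pd_swap_xy hu p
  rw [S4] at E4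
  rw [← S2, E3] at E1
  rw [← S3, E4] at E2
  have H := E1.symm.trans (S1.trans E2)
  have key : pd_y (pd_y u) p * pd_x v p =
      (pd_t (pd_x u) p + (-(pd_x u p) ^ 2 + pd_y u p) * pd_x (pd_x u) p
        - 3 * pd_x u p * pd_y (pd_x u) p) * pd_x v p := by
    simp only [Pi.add_apply, Pi.pow_apply, Nat.cast_ofNat] at H
    linear_combination -H
  exact mul_right_cancel₀ hvx key
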